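/- A subgraph T of L_n = G is a tour subgraph of G if and only if T is an L_n partial tour subgraph whose equivalence class is one of E01C, 0E1C, EE1C, 001C. Consequently, the minimum length of a tour subgraph of G equals the minimum, over these four classes, of the minimum length of an L_n PTS of that class. -/

import Mathlib

/-- Degree parity class of a vertex: degree zero, odd degree, or even positive degree. -/
inductive DegClass : Type
  | zero : DegClass
  | odd : DegClass
  | evenPos : DegClass
deriving DecidableEq

/-- The parity class of a natural number (a degree). -/
def degClass (d : ℕ) : DegClass :=
  if d = 0 then .zero else if d % 2 = 1 then .odd else .evenPos

/-- Names of the six vertical edge configurations. -/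
inductive VCName : Type
  | onepass : VCName
  | top : VCName
  | bottom : VCName
  | gap : VCName
  | twopass : VCName
  | none : VCName
deriving DecidableEq

/-- Names of the five horizontal edge configurations. -/
inductive HCName : Type
  | h11 : HCName
  | h20 : HCName
  | h02 : HCName
  | h22 : HCName
  | h00 : HCName
deriving DecidableEq

/-- Number of copies of the back cross-aisle edge `a_j a_{j+1}` in a horizontal configuration. -/
def hcA : HCName → ℕ
  | .h11 => 1
  | .h20 => 2
  | .h02 => 0
  | .h22 => 2
  | .h00 => 0

/-- Number of copies of the front cross-aisle edge `b_j b_{j+1}` in a horizontal configuration. -/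
def hcB : HCName → ℕ
  | .h11 => 1
  | .h20 => 0
  | .h02 => 2
  | .h22 => 2
  | .h00 => 0

/-- The seven equivalence classes, as triples (parity of `a_j`, parity of `b_j`, #components). -/
def cUU1C : DegClass × DegClass × ℕ := (.odd, .odd, 1)
def c0E1C : DegClass × DegClass × ℕ := (.zero, .evenPos, 1)
def cE01C : DegClass × DegClass × ℕ := (.evenPos, .zero, 1)
def cEE1C : DegClass × DegClass × ℕ := (.evenPos, .evenPos, 1)
def cEE2C : DegClass × DegClass × ℕ := (.evenPos, .evenPos, 2)
def c000C : DegClass × DegClass × ℕ := (.zero, .zero, 0)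
def c001C : DegClass × DegClass × ℕ := (.zero, .zero, 1)

/-- A single-block parallel-aisle warehouse in the sense of Ratliff and Rosenthal:
`n ≥ 1` vertical pick aisles, two horizontal cross-aisles, `picks j` pick vertices
strictly inside aisle `j`, nonnegative edge lengths, and a depot located at some
cross-aisle vertex `a_j` (if `depotTop`) or `b_j`. -/
structure Warehouse where
  n : ℕ
  npos : 1 ≤ n
  picks : Fin n → ℕ
  vlen : (j : Fin n) → Fin (picks j + 1) → ℝ
  hlenA : Fin (n - 1) → ℝ
  hlenB : Fin (n - 1) → ℝ
  vlen_nonneg : ∀ j i, 0 ≤ vlen j i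
  hlenA_nonneg : ∀ k, 0 ≤ hlenA k
  hlenB_nonneg : ∀ k, 0 ≤ hlenB k
  depotAisle : Fin n
  depotTop : Bool

namespace Warehouse

variable (W : Warehouse)

/-- Vertices of the warehouse graph: in aisle `j`, position `0` is the back cross-aisle
vertex `a_j`, position `picks j + 1` is the front cross-aisle vertex `b_j`, and
positions `1, …, picks j` are the pick vertices of aisle `j`. -/
def V : Type := Σ j : Fin W.n, Fin (W.picks j + 2)

instance : DecidableEq W.V :=
  inferInstanceAs (DecidableEq (Σ j : Fin W.n, Fin (W.picks j + 2)))

instance : Fintype W.V :=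
  inferInstanceAs (Fintype (Σ j : Fin W.n, Fin (W.picks j + 2)))

/-- The back cross-aisle vertex `a_j`. -/
def aV (j : Fin W.n) : W.V := ⟨j, 0⟩

/-- The front cross-aisle vertex `b_j`. -/
def bV (j : Fin W.n) : W.V := ⟨j, Fin.last (W.picks j + 1)⟩

/-- The depot vertex `v₀`. -/
def depot : W.V := if W.depotTop then W.aV W.depotAisle else W.bV W.depotAisle

/-- `v` is a pick vertex, i.e. a vertex strictly inside an aisle. -/
def IsPick (v : W.V) : Prop := 0 < v.2.val ∧ v.2.val < W.picks v.1 + 1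

/-- `v` is a required vertex, i.e. a member of `P` (a pick vertex or the depot). -/
def Required (v : W.V) : Prop := W.IsPick v ∨ v = W.depot

/-- Edges of the warehouse graph: a vertical edge `⟨j, i⟩` joins positions `i` and
`i+1` of aisle `j`; horizontal edges `inr (inl k)` join `a_k a_{k+1}` and
`inr (inr k)` join `b_k b_{k+1}`. -/
def E : Type := (Σ j : Fin W.n, Fin (W.picks j + 1)) ⊕ (Fin (W.n - 1) ⊕ Fin (W.n - 1))

instance : DecidableEq W.E :=
  inferInstanceAs (DecidableEq ((Σ j : Fin W.n, Fin (W.picks j + 1)) ⊕ (Fin (W.n - 1) ⊕ Fin (W.n - 1))))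

instance : Fintype W.E :=
  inferInstanceAs (Fintype ((Σ j : Fin W.n, Fin (W.picks j + 1)) ⊕ (Fin (W.n - 1) ⊕ Fin (W.n - 1))))

/-- The left aisle of a horizontal edge index. -/
def leftAisle (k : Fin (W.n - 1)) : Fin W.n := ⟨k.val, by have := k.isLt; omega⟩

/-- The right aisle of a horizontal edge index. -/
def rightAisle (k : Fin (W.n - 1)) : Fin W.n := ⟨k.val + 1, by have := k.isLt; omega⟩

/-- Endpoints of an edge. -/
def ends : W.E → W.V × W.V
  | .inl ⟨j, i⟩ => (⟨j, i.castSucc⟩, ⟨j, i.succ⟩)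
  | .inr (.inl k) => (W.aV (W.leftAisle k), W.aV (W.rightAisle k))
  | .inr (.inr k) => (W.bV (W.leftAisle k), W.bV (W.rightAisle k))

/-- Length of an edge. -/
def elen : W.E → ℝ
  | .inl ⟨j, i⟩ => W.vlen j i
  | .inr (.inl k) => W.hlenA k
  | .inr (.inr k) => W.hlenB k

/-- A subgraph of `G` is a multiplicity function taking each edge with multiplicity at most 2. -/
def IsSub (T : W.E → ℕ) : Prop := ∀ e, T e ≤ 2

/-- Degree of a vertex in a subgraph, counting edges with multiplicity. -/
def deg (T : W.E → ℕ) (v : W.V) : ℕ :=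
  ∑ e : W.E, T e * ((if (W.ends e).1 = v then 1 else 0) + (if (W.ends e).2 = v then 1 else 0))

/-- Total length of a subgraph, counting edges with multiplicity. -/
def length (T : W.E → ℕ) : ℝ := ∑ e : W.E, (T e : ℝ) * W.elen e

/-- Source of a directed traversal step. -/
def stepSrc (s : W.E × Bool) : W.V := if s.2 then (W.ends s.1).1 else (W.ends s.1).2

/-- Destination of a directed traversal step. -/
def stepDst (s : W.E × Bool) : W.V := if s.2 then (W.ends s.1).2 else (W.ends s.1).1

/-- A list of directed steps is a closed walk. -/
def IsClosedWalk (l : List (W.E × Bool)) : Prop :=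
  l.Chain' (fun s t => W.stepDst s = W.stepSrc t) ∧
  ∀ s ∈ l.head?, ∀ t ∈ l.getLast?, W.stepDst t = W.stepSrc s

/-- `T` is a tour subgraph: every required vertex has positive degree and there is a
closed walk traversing every edge of `T`, counted with multiplicity, exactly once. -/
def IsTour (T : W.E → ℕ) : Prop :=
  W.IsSub T ∧ (∀ v, W.Required v → 0 < W.deg T v) ∧
  ∃ l : List (W.E × Bool), W.IsClosedWalk l ∧ ∀ e : W.E, (l.map Prod.fst).count e = T e

/-- `T` is an `L` partial tour subgraph: `T` is a subgraph supported on `L` and there is a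
subgraph `C` of `G − L` such that `T ∪ C` is a tour subgraph of `G`. -/
def IsPTS (L : Set W.E) (T : W.E → ℕ) : Prop :=
  W.IsSub T ∧ (∀ e ∉ L, T e = 0) ∧
  ∃ C : W.E → ℕ, W.IsSub C ∧ (∀ e ∈ L, C e = 0) ∧ W.IsTour (fun e => T e + C e)

/-- Two `L` PTSs are equivalent: any completion of one is a completion of the other. -/
def EquivPTS (L : Set W.E) (T₁ T₂ : W.E → ℕ) : Prop :=
  ∀ C : W.E → ℕ, W.IsSub C → (∀ e ∈ L, C e = 0) →
    (W.IsTour (fun e => T₁ e + C e) ↔ W.IsTour (fun e => T₂ e + C e))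

/-- The edge set containing the vertical edges of the (0-indexed) aisles `< vmax` and the
horizontal edges with (0-indexed) index `< hmax`.  Thus, in paper (1-indexed) notation,
`L_j = edgesUpTo j (j-1)`, `L_j^- = edgesUpTo (j-1) (j-1)` and `G = edgesUpTo n (n-1)`. -/
def edgesUpTo (vmax hmax : ℕ) : Set W.E := fun e =>
  match e with
  | .inl ⟨i, _⟩ => i.val < vmax
  | .inr (.inl k) => k.val < hmax
  | .inr (.inr k) => k.val < hmax

/-- The simple graph on the vertices of `G` induced by the edges of positive multiplicity. -/
def sgraph (T : W.E → ℕ) : SimpleGraph W.V where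
  Adj v w := v ≠ w ∧ ∃ e, 0 < T e ∧
    (((W.ends e).1 = v ∧ (W.ends e).2 = w) ∨ ((W.ends e).1 = w ∧ (W.ends e).2 = v))
  symm := by
    constructor
    intro v w hvw
    obtain ⟨hne, e, he, hor⟩ := hvw
    exact ⟨hne.symm, e, he, hor.symm⟩
  loopless := by constructor; intro v h; exact h.1 rfl

/-- Number of connected components of a subgraph after deleting all vertices of degree zero. -/
noncomputable def numComp (T : W.E → ℕ) : ℕ :=
  Nat.card ((W.sgraph T).induce {v : W.V | 0 < W.deg T v}).ConnectedComponent

/-- `v` and `w` both have positive degree but lie in different connected components of `T`. -/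
def SepComp (T : W.E → ℕ) (v w : W.V) : Prop :=
  0 < W.deg T v ∧ 0 < W.deg T w ∧ ¬ (W.sgraph T).Reachable v w

/-- The equivalence class of a subgraph relative to the cross-aisle vertices of aisle `j`:
the degree parities of `a_j` and `b_j` and the number of nonempty connected components. -/
noncomputable def classOf (T : W.E → ℕ) (j : Fin W.n) : DegClass × DegClass × ℕ :=
  (degClass (W.deg T (W.aV j)), degClass (W.deg T (W.bV j)), W.numComp T)

theorem exists_gapIdx (j : Fin W.n) :
    ∃ g : Fin (W.picks j + 1), ∀ i, W.vlen j i ≤ W.vlen j g := by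
  obtain ⟨g, -, hg⟩ :=
    Finset.exists_max_image (Finset.univ : Finset (Fin (W.picks j + 1))) (W.vlen j)
      ⟨0, Finset.mem_univ 0⟩
  exact ⟨g, fun i => hg i (Finset.mem_univ i)⟩

/-- The vertical edge of aisle `j` of maximum length: the edge omitted by the `gap`
configuration (which leaves the largest section of the aisle unconnected). -/
noncomputable def gapIdx (j : Fin W.n) : Fin (W.picks j + 1) := (W.exists_gapIdx j).choose

theorem gapIdx_spec (j : Fin W.n) : ∀ i, W.vlen j i ≤ W.vlen j (W.gapIdx j) :=
  (W.exists_gapIdx j).choose_spec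

/-- The multiplicity of the `i`-th vertical edge of aisle `j` in each of the six vertical
edge configurations. -/
noncomputable def vconfFun (j : Fin W.n) (c : VCName) (i : Fin (W.picks j + 1)) : ℕ :=
  match c with
  | .onepass => 1
  | .top => if i.val < W.picks j then 2 else 0
  | .bottom => if 1 ≤ i.val then 2 else 0
  | .gap => if i = W.gapIdx j then 0 else 2
  | .twopass => 2
  | .none => 0

/-- A vertical edge configuration in aisle `j`, as a subgraph of `G`. -/
noncomputable def vcSub (j : Fin W.n) (c : VCName) : W.E → ℕ := fun e =>
  match e with
  | .inl ⟨i, x⟩ =>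
      if h : i = j then W.vconfFun j c ⟨x.val, by exact h ▸ x.isLt⟩ else 0
  | .inr _ => 0

/-- A horizontal edge configuration between aisles `k` and `k+1`, as a subgraph of `G`. -/
def hcSub (k : Fin (W.n - 1)) (c : HCName) : W.E → ℕ := fun e =>
  match e with
  | .inl _ => 0
  | .inr (.inl k') => if k' = k then hcA c else 0
  | .inr (.inr k') => if k' = k then hcB c else 0

end Warehouse

/-!
Every edge of `G` lies in `L_n`, so the only completion of an `L_n` PTS is the empty one and
`L_n` PTSs are exactly the tour subgraphs. In a closed walk every vertex is left as often as it
is entered, so all degrees of a tour subgraph are even; and every vertex of positive degree is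
the start of a step of the walk, so the tour is connected, and nonempty since the depot is
required. Hence the class at `a_n, b_n` has both parities in `{0, E}` and a single component.
-/

theorem List.IsChain.map_eq_map_tail_append {α β : Type*} {f g : α → β} :
    ∀ {l : List α}, l.IsChain (fun x y => g x = f y) → (hl : l ≠ []) →
      l.map g = l.tail.map f ++ [g (l.getLast hl)]
  | [], _, hl => absurd rfl hl
  | [_], _, _ => rfl
  | x :: y :: t, h, _ => by
    rw [List.isChain_cons_cons] at h
    rw [List.map_cons, h.2.map_eq_map_tail_append (List.cons_ne_nil y t), h.1]
    simp

theorem List.IsChain.map_perm_map {α β : Type*} {f g : α → β} {l : List α}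
    (h : l.IsChain (fun x y => g x = f y))
    (hclosed : ∀ x ∈ l.head?, ∀ y ∈ l.getLast?, g y = f x) : (l.map g).Perm (l.map f) := by
  rcases l with _ | ⟨x, t⟩
  · simp
  · rw [h.map_eq_map_tail_append (List.cons_ne_nil x t),
      hclosed x rfl _ (List.getLast?_eq_some_getLast _)]
    exact List.perm_append_singleton _ _

theorem SimpleGraph.Reachable.induce_of_adj_mem {V : Type*} {G : SimpleGraph V} {s : Set V}
    (hs : ∀ u v, G.Adj u v → v ∈ s) {u v : V} (hu : u ∈ s) (hv : v ∈ s)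
    (h : G.Reachable u v) : (G.induce s).Reachable ⟨u, hu⟩ ⟨v, hv⟩ := by
  obtain ⟨p⟩ := h
  refine ⟨p.induce s fun x hx => ?_⟩
  obtain hxu | ⟨d, hd, hxd⟩ := SimpleGraph.Walk.mem_support_iff_exists_mem_edges.1 hx
  · exact hxu ▸ hv
  · obtain ⟨y, rfl⟩ := Sym2.mem_iff_exists.1 hxd
    exact hs y x (p.adj_of_mem_edges hd).symm

theorem List.sum_count_mul {α : Type*} [Fintype α] [DecidableEq α] (l : List α) (f : α → ℕ) :
    ∑ a, l.count a * f a = (l.map f).sum := by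
  rw [Finset.sum_list_map_count]
  refine (Finset.sum_subset (Finset.subset_univ _) fun a _ ha => ?_).symm
  rw [List.count_eq_zero_of_not_mem (by simpa using ha), zero_mul]

theorem degClass_two_mul (k : ℕ) :
    degClass (2 * k) = if k = 0 then .zero else .evenPos := by
  unfold degClass
  split_ifs <;> first | rfl | omega

namespace Warehouse

variable (W : Warehouse)

theorem mem_edgesUpTo_n : ∀ e : W.E, e ∈ W.edgesUpTo W.n (W.n - 1)
  | .inl ⟨j, _⟩ => j.isLt
  | .inr (.inl k) => k.isLt
  | .inr (.inr k) => k.isLt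

theorem isPTS_edgesUpTo_n_iff (T : W.E → ℕ) :
    W.IsPTS (W.edgesUpTo W.n (W.n - 1)) T ↔ W.IsTour T := by
  constructor
  · rintro ⟨-, -, C, -, hC, htour⟩
    simpa [hC _ (W.mem_edgesUpTo_n _)] using htour
  · intro h
    exact ⟨h.1, fun e he => absurd (W.mem_edgesUpTo_n e) he, 0, fun _ => Nat.zero_le 2,
      fun _ _ => rfl, by simpa using h⟩

theorem ends_fst_ne_snd : ∀ e : W.E, (W.ends e).1 ≠ (W.ends e).2
  | .inl _ => fun h => by simpa [ends] using congrArg (fun v : W.V => v.2.val) h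
  | .inr (.inl _) => fun h => by
    simpa [ends, aV, leftAisle, rightAisle] using congrArg (fun v : W.V => v.1.val) h
  | .inr (.inr _) => fun h => by
    simpa [ends, bV, leftAisle, rightAisle] using congrArg (fun v : W.V => v.1.val) h

variable {W}

theorem deg_pos_of_mem_ends {T : W.E → ℕ} {e : W.E} (he : 0 < T e) {v : W.V}
    (hv : (W.ends e).1 = v ∨ (W.ends e).2 = v) : 0 < W.deg T v := by
  refine lt_of_lt_of_le ?_ (Finset.single_le_sum (fun _ _ => Nat.zero_le _) (Finset.mem_univ e))
  rcases hv with h | h <;> simp [h, he]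

theorem deg_pos_of_sgraph_adj {T : W.E → ℕ} {v w : W.V} (h : (W.sgraph T).Adj v w) :
    0 < W.deg T w := by
  obtain ⟨-, e, he, ⟨-, hw⟩ | ⟨hw, -⟩⟩ := h
  exacts [deg_pos_of_mem_ends he (Or.inr hw), deg_pos_of_mem_ends he (Or.inl hw)]

theorem sgraph_adj_stepSrc_stepDst {T : W.E → ℕ} {s : W.E × Bool} (hs : 0 < T s.1) :
    (W.sgraph T).Adj (W.stepSrc s) (W.stepDst s) := by
  obtain ⟨e, _ | _⟩ := s
  · exact ⟨(W.ends_fst_ne_snd e).symm, e, hs, Or.inr ⟨rfl, rfl⟩⟩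
  · exact ⟨W.ends_fst_ne_snd e, e, hs, Or.inl ⟨rfl, rfl⟩⟩

theorem deg_eq_sum_map_steps {T : W.E → ℕ} {l : List (W.E × Bool)}
    (hl : ∀ e, (l.map Prod.fst).count e = T e) (v : W.V) :
    W.deg T v = (l.map fun s =>
      (if W.stepSrc s = v then 1 else 0) + (if W.stepDst s = v then 1 else 0)).sum := by
  simp only [deg, ← hl, List.sum_count_mul, List.map_map]
  congr 1
  refine List.map_congr_left fun ⟨e, b⟩ _ => ?_
  cases b <;> simp [stepSrc, stepDst, add_comm]

theorem IsClosedWalk.deg_eq_two_mul {T : W.E → ℕ} {l : List (W.E × Bool)} (hw : W.IsClosedWalk l)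
    (hl : ∀ e, (l.map Prod.fst).count e = T e) (v : W.V) :
    W.deg T v = 2 * (l.map fun s => if W.stepSrc s = v then 1 else 0).sum := by
  have hperm := (List.IsChain.map_perm_map hw.1 hw.2).map (fun w => if w = v then 1 else 0)
  rw [deg_eq_sum_map_steps hl, List.sum_map_add, two_mul]
  simpa [List.map_map, Function.comp_def] using hperm.sum_eq

theorem IsClosedWalk.exists_stepSrc_eq_of_deg_pos {T : W.E → ℕ} {l : List (W.E × Bool)}
    (hw : W.IsClosedWalk l) (hl : ∀ e, (l.map Prod.fst).count e = T e) {v : W.V}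
    (hv : 0 < W.deg T v) : ∃ s ∈ l, W.stepSrc s = v := by
  by_contra! h
  have hzero : ∀ x ∈ l.map fun s => if W.stepSrc s = v then 1 else 0, x = 0 := by
    intro x hx
    obtain ⟨s, hs, rfl⟩ := List.mem_map.1 hx
    simp [h s hs]
  rw [hw.deg_eq_two_mul hl, List.sum_eq_zero hzero] at hv
  exact lt_irrefl 0 hv

theorem reachable_stepSrc_of_isChain {T : W.E → ℕ} {l : List (W.E × Bool)}
    (hc : l.IsChain fun s t => W.stepDst s = W.stepSrc t) (hpos : ∀ s ∈ l, 0 < T s.1)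
    (hne : l ≠ []) : ∀ s ∈ l, (W.sgraph T).Reachable (W.stepSrc (l.head hne)) (W.stepSrc s) :=
  (hc.imp_of_mem_imp (S := fun s t => W.stepDst s = W.stepSrc t ∧ 0 < T s.1)
    fun s _ hs _ h => ⟨h, hpos s hs⟩).induction _ l
    (fun _ _ ⟨hst, hs⟩ hr => hr.trans (hst ▸ (sgraph_adj_stepSrc_stepDst hs).reachable))
    (fun _ => .rfl)

theorem IsTour.connected {T : W.E → ℕ} (hT : W.IsTour T) :
    ((W.sgraph T).induce {v | 0 < W.deg T v}).Connected := by
  obtain ⟨-, hreq, l, hw, hl⟩ := hT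
  have hpos : ∀ s ∈ l, 0 < T s.1 := fun s hs =>
    hl s.1 ▸ List.count_pos_iff.2 (List.mem_map_of_mem hs)
  have hdepot : 0 < W.deg T W.depot := hreq _ (Or.inr rfl)
  obtain ⟨s₀, hs₀, -⟩ := hw.exists_stepSrc_eq_of_deg_pos hl hdepot
  have hne : l ≠ [] := List.ne_nil_of_mem hs₀
  have hreach : ∀ v, 0 < W.deg T v → (W.sgraph T).Reachable (W.stepSrc (l.head hne)) v :=
    fun v hv =>
      let ⟨s, hs, hsv⟩ := hw.exists_stepSrc_eq_of_deg_pos hl hv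
      hsv ▸ reachable_stepSrc_of_isChain hw.1 hpos hne s hs
  refine (SimpleGraph.connected_iff _).2 ⟨fun ⟨u, hu⟩ ⟨v, hv⟩ => ?_, ⟨⟨W.depot, hdepot⟩⟩⟩
  exact ((hreach u hu).symm.trans (hreach v hv)).induce_of_adj_mem
    (fun _ _ => deg_pos_of_sgraph_adj) hu hv

theorem IsTour.numComp_eq_one {T : W.E → ℕ} (hT : W.IsTour T) : W.numComp T = 1 := by
  have hconn := hT.connected
  have := hconn.preconnected.subsingleton_connectedComponent
  have := hconn.nonempty
  exact Nat.card_eq_one_iff_unique.2 ⟨inferInstance, inferInstance⟩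

theorem IsTour.classOf_mem {T : W.E → ℕ} (hT : W.IsTour T) (j : Fin W.n) :
    W.classOf T j ∈ ({cE01C, c0E1C, cEE1C, c001C} : Set (DegClass × DegClass × ℕ)) := by
  obtain ⟨-, -, l, hw, hl⟩ := id hT
  rw [classOf, hw.deg_eq_two_mul hl, hw.deg_eq_two_mul hl, hT.numComp_eq_one,
    degClass_two_mul, degClass_two_mul]
  split_ifs <;> simp [cE01C, c0E1C, cEE1C, c001C]

theorem isTour_iff_isPTS_and_classOf_mem (T : W.E → ℕ) (j : Fin W.n) :
    W.IsTour T ↔ W.IsPTS (W.edgesUpTo W.n (W.n - 1)) T ∧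
      W.classOf T j ∈ ({cE01C, c0E1C, cEE1C, c001C} : Set (DegClass × DegClass × ℕ)) :=
  ⟨fun hT => ⟨(W.isPTS_edgesUpTo_n_iff T).2 hT, hT.classOf_mem j⟩,
    fun h => (W.isPTS_edgesUpTo_n_iff T).1 h.1⟩

end Warehouse

/-- a subgraph of `G = L_n` is a tour subgraph iff it is an `L_n` PTS of
class `E01C`, `0E1C`, `EE1C` or `001C`; consequently the set of lengths of tour subgraphs
equals the set of lengths of `L_n` PTSs of those four classes (so the minima coincide). -/
theorem stmt4 (W : Warehouse) :
    (∀ T : W.E → ℕ, W.IsTour T ↔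
      (W.IsPTS (W.edgesUpTo W.n (W.n - 1)) T ∧
        W.classOf T ⟨W.n - 1, by have := W.npos; omega⟩ ∈
          ({cE01C, c0E1C, cEE1C, c001C} : Set (DegClass × DegClass × ℕ)))) ∧
    {x : ℝ | ∃ T : W.E → ℕ, W.IsTour T ∧ W.length T = x} =
      {x : ℝ | ∃ T : W.E → ℕ, W.IsPTS (W.edgesUpTo W.n (W.n - 1)) T ∧
        W.classOf T ⟨W.n - 1, by have := W.npos; omega⟩ ∈
          ({cE01C, c0E1C, cEE1C, c001C} : Set (DegClass × DegClass × ℕ)) ∧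
        W.length T = x} := by
  have key := fun T => W.isTour_iff_isPTS_and_classOf_mem T ⟨W.n - 1, by have := W.npos; omega⟩
  refine ⟨key, Set.ext fun x => exists_congr fun T => ?_⟩
  rw [key, and_assoc]
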